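/- For θ ∈ ℝ let Rx(θ) be the 2×2 unitary matrix with rows (cos(θ/2), −i·sin(θ/2)) and (−i·sin(θ/2), cos(θ/2)). Let v, w ∈ ℝ^n agree in all coordinates except the j-th, and let |v⟩ = Rx(v_1)|0⟩ ⊗ ⋯ ⊗ Rx(v_n)|0⟩ and |w⟩ = Rx(w_1)|0⟩ ⊗ ⋯ ⊗ Rx(w_n)|0⟩ be the angle-encoded pure states (Kronecker products of 2-dimensional vectors), with ρ = |v⟩⟨v| and σ = |w⟩⟨w|. Then the trace distance satisfies D(ρ,σ) = |sin((v_j − w_j)/2)|. -/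

import Mathlib

open Matrix BigOperators
open scoped ComplexOrder

namespace QDP

variable {n : Type*} [Fintype n] [DecidableEq n]

/-- Trace distance `D(ρ,σ) = (1/2) tr |ρ - σ|`, where `|A| = sqrt (Aᴴ A)`. -/
noncomputable def traceDist (ρ σ : Matrix n n ℂ) : ℝ :=
  (1 / 2 : ℝ) * (((Matrix.posSemidef_conjTranspose_mul_self (ρ - σ)).1.eigenvectorUnitary.1 *
    diagonal ((fun x : ℝ => (x : ℂ)) ∘ (√·) ∘ (Matrix.posSemidef_conjTranspose_mul_self (ρ - σ)).1.eigenvalues) *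
    (star (Matrix.posSemidef_conjTranspose_mul_self (ρ - σ)).1.eigenvectorUnitary :
      Matrix n n ℂ)).trace).re

/-- A density matrix: positive semidefinite with trace one. -/
def IsDensity (ρ : Matrix n n ℂ) : Prop := ρ.PosSemidef ∧ ρ.trace = 1

/-- The largest eigenvalue of a (Hermitian) matrix. -/
noncomputable def lamMax (M : Matrix n n ℂ) : ℝ :=
  if h : M.IsHermitian then ⨆ i, h.eigenvalues i else 0

/-- The smallest eigenvalue of a (Hermitian) matrix. -/
noncomputable def lamMin (M : Matrix n n ℂ) : ℝ :=
  if h : M.IsHermitian then ⨅ i, h.eigenvalues i else 0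

/-- Application of a quantum channel given by Kraus matrices. -/
noncomputable def applyChan {ι : Type*} [Fintype ι] (E : ι → Matrix n n ℂ)
    (ρ : Matrix n n ℂ) : Matrix n n ℂ := ∑ j, E j * ρ * (E j)ᴴ

/-- The dual of a quantum channel given by Kraus matrices. -/
noncomputable def dualChan {ι : Type*} [Fintype ι] (E : ι → Matrix n n ℂ)
    (M : Matrix n n ℂ) : Matrix n n ℂ := ∑ j, (E j)ᴴ * M * E j

/-- `(ε,δ)`-differential privacy within `η` of the quantum algorithm `(E, M)`. -/
def IsDP {ι : Type*} [Fintype ι] {O : Type*} [Fintype O]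
    (E : ι → Matrix n n ℂ) (M : O → Matrix n n ℂ) (ε δ η : ℝ) : Prop :=
  ∀ ρ σ : Matrix n n ℂ, IsDensity ρ → IsDensity σ → traceDist ρ σ ≤ η →
    ∀ S : Finset O,
      (∑ k ∈ S, (M k * applyChan E ρ).trace).re ≤
        Real.exp ε * (∑ k ∈ S, (M k * applyChan E σ).trace).re + δ

/-- Rank-one projection `|ψ⟩⟨ψ|`. -/
noncomputable def proj (ψ : n → ℂ) : Matrix n n ℂ := vecMulVec ψ (star ψ)

end QDP

namespace QDP

/-- The rotation gate `Rx(θ)` about the x-axis. -/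
noncomputable def Rx (θ : ℝ) : Matrix (Fin 2) (Fin 2) ℂ :=
  !![((Real.cos (θ / 2) : ℝ) : ℂ), -Complex.I * ((Real.sin (θ / 2) : ℝ) : ℂ);
     -Complex.I * ((Real.sin (θ / 2) : ℝ) : ℂ), ((Real.cos (θ / 2) : ℝ) : ℂ)]

/-- The basis state `|0⟩ ∈ ℂ²`. -/
def ket0 : Fin 2 → ℂ := fun i => if i = 0 then 1 else 0

/-- Angle encoding of a classical vector `v ∈ ℝⁿ`:
the Kronecker product `Rx(v₁)|0⟩ ⊗ ⋯ ⊗ Rx(vₙ)|0⟩`, as a vector indexed by `Fin m → Fin 2`. -/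
noncomputable def angleEncode {m : ℕ} (v : Fin m → ℝ) : (Fin m → Fin 2) → ℂ :=
  fun f => ∏ i, (Rx (v i) *ᵥ ket0) (f i)

end QDP

/-!
For unit vectors `ψ, φ` with overlap `c = ⟨ψ|φ⟩`, the difference `A = |ψ⟩⟨ψ| - |φ⟩⟨φ|` is
Hermitian and lives on `span {ψ, φ}`, where `A² = AᴴA` satisfies `(A²)² = (1 - |c|²) A²` and
`tr A² = 2 (1 - |c|²)`. Hence `|A| = A² / √(1 - |c|²)` (or `A = 0` when `|c| = 1`) and
`D = √(1 - |c|²)`. For angle encodings the overlap factors over the tensor factors as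
`∏ᵢ cos ((vᵢ - wᵢ) / 2)`, which collapses to the `j`-th factor, and `1 - cos² = sin²`.
-/

namespace QDP

theorem proj_isHermitian {n : Type*} (ψ : n → ℂ) : (proj ψ).IsHermitian := by
  simp [IsHermitian, proj]

section

variable {n : Type*} [Fintype n]

/- `traceDist` is built from the spectral decomposition of `(ρ - σ)ᴴ (ρ - σ)`, i.e. from its
continuous-functional-calculus square root, and positive square roots are unique. -/
open scoped MatrixOrder in
theorem traceDist_eq_of_mul_self_eq [DecidableEq n] {ρ σ S : Matrix n n ℂ} (hS : S.PosSemidef)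
    (h : S * S = (ρ - σ)ᴴ * (ρ - σ)) :
    traceDist ρ σ = S.trace.re / 2 := by
  have hM := (posSemidef_conjTranspose_mul_self (ρ - σ))
  have hsqrt : cfc Real.sqrt ((ρ - σ)ᴴ * (ρ - σ)) = S := by
    rw [← cfcₙ_eq_cfc (hf0 := by simp), ← CFC.sqrt_eq_real_sqrt _ hM.nonneg,
      CFC.sqrt_eq_iff _ _ hM.nonneg hS.nonneg, h]
  have e := hM.1.cfc_eq Real.sqrt
  rw [hsqrt, IsHermitian.cfc, Unitary.conjStarAlgAut_apply] at e
  rw [e, div_eq_inv_mul, ← one_div]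
  rfl

theorem traceDist_eq_of_mul_self_eq_smul [DecidableEq n] {ρ σ : Matrix n n ℂ} {t : ℝ} (ht : 0 < t)
    (h : (ρ - σ)ᴴ * (ρ - σ) * ((ρ - σ)ᴴ * (ρ - σ)) = (t : ℂ) • ((ρ - σ)ᴴ * (ρ - σ))) :
    traceDist ρ σ = ((ρ - σ)ᴴ * (ρ - σ)).trace.re / (2 * √t) := by
  set M := (ρ - σ)ᴴ * (ρ - σ)
  have hs : (√t : ℂ)⁻¹ * (√t : ℂ)⁻¹ * t = 1 := by
    rw [← mul_inv, ← Complex.ofReal_mul, Real.mul_self_sqrt ht.le]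
    exact inv_mul_cancel₀ (by exact_mod_cast ht.ne')
  have hS : ((√t : ℂ)⁻¹ • M).PosSemidef :=
    (posSemidef_conjTranspose_mul_self _).smul (by
      rw [← Complex.ofReal_inv]; exact_mod_cast inv_nonneg.mpr (Real.sqrt_nonneg t))
  rw [traceDist_eq_of_mul_self_eq hS (by rw [smul_mul_smul, h, smul_smul, hs, one_smul]),
    trace_smul, smul_eq_mul, ← Complex.ofReal_inv, Complex.re_ofReal_mul]
  field_simp

theorem traceDist_self [DecidableEq n] (ρ : Matrix n n ℂ) : traceDist ρ ρ = 0 := by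
  simp [traceDist_eq_of_mul_self_eq PosSemidef.zero (ρ := ρ) (σ := ρ) (by simp)]

variable {ψ φ : n → ℂ}

theorem proj_mul_proj (ψ φ : n → ℂ) :
    proj ψ * proj φ = (star ψ ⬝ᵥ φ) • vecMulVec ψ (star φ) := by
  rw [proj, proj, vecMulVec_mul_vecMulVec, vecMulVec_smul]

theorem sub_proj_mul_self (hψ : star ψ ⬝ᵥ ψ = 1) (hφ : star φ ⬝ᵥ φ = 1) :
    (proj ψ - proj φ) * (proj ψ - proj φ) = proj ψ + proj φ
      - (star ψ ⬝ᵥ φ) • vecMulVec ψ (star φ) - (star φ ⬝ᵥ ψ) • vecMulVec φ (star ψ) := by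
  simp only [sub_mul, mul_sub, proj_mul_proj, hψ, hφ, one_smul]
  rw [← proj, ← proj]
  abel

theorem ofReal_norm_dotProduct_sq (ψ φ : n → ℂ) :
    ((‖star ψ ⬝ᵥ φ‖ ^ 2 : ℝ) : ℂ) = (star ψ ⬝ᵥ φ) * (star φ ⬝ᵥ ψ) := by
  rw [star_dotProduct φ, Complex.ofReal_pow, ← Complex.mul_conj']
  rfl

theorem sub_proj_mul_self_mul_self (hψ : star ψ ⬝ᵥ ψ = 1) (hφ : star φ ⬝ᵥ φ = 1) :
    (proj ψ - proj φ) * (proj ψ - proj φ) * ((proj ψ - proj φ) * (proj ψ - proj φ)) =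
      ((1 - ‖star ψ ⬝ᵥ φ‖ ^ 2 : ℝ) : ℂ) • ((proj ψ - proj φ) * (proj ψ - proj φ)) := by
  rw [sub_proj_mul_self hψ hφ, Complex.ofReal_sub, Complex.ofReal_one, ofReal_norm_dotProduct_sq]
  simp only [proj, sub_mul, mul_sub, add_mul, mul_add, smul_mul_assoc, mul_smul_comm,
    vecMulVec_mul_vecMulVec, vecMulVec_smul, hψ, hφ, one_smul, smul_smul]
  module

theorem trace_sub_proj_mul_self (hψ : star ψ ⬝ᵥ ψ = 1) (hφ : star φ ⬝ᵥ φ = 1) :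
    ((proj ψ - proj φ) * (proj ψ - proj φ)).trace = 2 * ((1 - ‖star ψ ⬝ᵥ φ‖ ^ 2 : ℝ) : ℂ) := by
  rw [sub_proj_mul_self hψ hφ, Complex.ofReal_sub, Complex.ofReal_one, ofReal_norm_dotProduct_sq]
  simp only [proj, trace_sub, trace_add, trace_smul, trace_vecMulVec, dotProduct_comm _ (star _),
    hψ, hφ, smul_eq_mul]
  ring

theorem traceDist_proj [DecidableEq n] (hψ : star ψ ⬝ᵥ ψ = 1) (hφ : star φ ⬝ᵥ φ = 1) :
    traceDist (proj ψ) (proj φ) = √(1 - ‖star ψ ⬝ᵥ φ‖ ^ 2) := by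
  have htr := trace_sub_proj_mul_self hψ hφ
  have hMM := sub_proj_mul_self_mul_self hψ hφ
  set t := 1 - ‖star ψ ⬝ᵥ φ‖ ^ 2
  have hA : (proj ψ - proj φ)ᴴ = proj ψ - proj φ :=
    ((proj_isHermitian ψ).sub (proj_isHermitian φ)).eq
  have hM := posSemidef_conjTranspose_mul_self (proj ψ - proj φ)
  rw [hA] at hM
  have ht : 0 ≤ t := by
    have := hM.trace_nonneg
    rw [htr, ← Complex.ofReal_ofNat, ← Complex.ofReal_mul, Complex.zero_le_real] at this
    linarith
  rcases ht.eq_or_lt with ht0 | ht0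
  · have hA0 : proj ψ - proj φ = 0 := by
      rw [← conjTranspose_mul_self_eq_zero, hA, ← conjTranspose_mul_self_eq_zero, hM.1.eq, hMM,
        ← ht0, Complex.ofReal_zero, zero_smul]
    rw [sub_eq_zero.mp hA0, traceDist_self, ← ht0, Real.sqrt_zero]
  · rw [traceDist_eq_of_mul_self_eq_smul ht0 (by rwa [hA]),
      hA, htr, ← Complex.ofReal_ofNat, ← Complex.ofReal_mul, Complex.ofReal_re]
    field_simp
    rw [Real.sq_sqrt ht]

end

theorem Rx_mulVec_ket0 (θ : ℝ) :
    Rx θ *ᵥ ket0 = ![(Real.cos (θ / 2) : ℂ), -Complex.I * (Real.sin (θ / 2) : ℂ)] := by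
  ext i
  fin_cases i <;> simp [Rx, ket0, mulVec, dotProduct]

theorem star_Rx_mulVec_ket0_dotProduct (θ η : ℝ) :
    star (Rx θ *ᵥ ket0) ⬝ᵥ (Rx η *ᵥ ket0) = (Real.cos ((θ - η) / 2) : ℂ) := by
  rw [sub_div, Real.cos_sub, Rx_mulVec_ket0, Rx_mulVec_ket0]
  simp only [dotProduct, Fin.sum_univ_two, Pi.star_apply, Matrix.cons_val_zero,
    Matrix.cons_val_one, Complex.star_def, map_mul, map_neg, Complex.conj_I,
    Complex.conj_ofReal]
  push_cast
  ring_nf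
  rw [Complex.I_sq]
  ring

theorem star_angleEncode_dotProduct {m : ℕ} (v w : Fin m → ℝ) :
    star (angleEncode v) ⬝ᵥ angleEncode w = ∏ i, (Real.cos ((v i - w i) / 2) : ℂ) := by
  simp only [angleEncode, dotProduct, Pi.star_apply, star_prod, ← Finset.prod_mul_distrib]
  rw [← Fintype.prod_sum (fun i x => star ((Rx (v i) *ᵥ ket0) x) * (Rx (w i) *ᵥ ket0) x)]
  exact Finset.prod_congr rfl fun i _ => star_Rx_mulVec_ket0_dotProduct (v i) (w i)

theorem star_angleEncode_dotProduct_self {m : ℕ} (v : Fin m → ℝ) :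
    star (angleEncode v) ⬝ᵥ angleEncode v = 1 := by
  simp [star_angleEncode_dotProduct]

end QDP

open QDP in
/-- The trace distance between angle encodings of classical vectors that agree except in
the `j`-th coordinate is `|sin((v_j - w_j)/2)|`. -/
theorem traceDist_angleEncode {m : ℕ} (v w : Fin m → ℝ) (j : Fin m)
    (hvw : ∀ i, i ≠ j → v i = w i) :
    traceDist (proj (angleEncode v)) (proj (angleEncode w)) =
      |Real.sin ((v j - w j) / 2)| := by
  have hoverlap : star (angleEncode v) ⬝ᵥ angleEncode w = (Real.cos ((v j - w j) / 2) : ℂ) := by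
    rw [star_angleEncode_dotProduct,
      Finset.prod_eq_single j (fun i _ hi => by simp [hvw i hi]) (by simp)]
  rw [traceDist_proj (star_angleEncode_dotProduct_self v) (star_angleEncode_dotProduct_self w),
    hoverlap, Complex.norm_real, Real.norm_eq_abs, sq_abs, ← Real.sin_sq,
    Real.sqrt_sq_eq_abs]
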